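/- Let A, B be bounded linear operators on H. Then for every real number r ≥ 1, ber(A*B)^r ≤ (1/√2) · ber(|B|^{2r} + i·|A|^{2r}), where i denotes the imaginary unit. -/

import Mathlib

set_option synthInstance.maxHeartbeats 1000000
set_option maxHeartbeats 1000000

open scoped NNReal
open ContinuousLinearMap

/-- The Berezin number of an operator `T`, relative to the family `k` of
(normalized reproducing kernel) vectors indexed by `Ω`. -/
noncomputable def ber {H : Type*} [NormedAddCommGroup H] [InnerProductSpace ℂ H]
    {Ω : Type*} (k : Ω → H) (T : H →L[ℂ] H) : ℝ :=
  ⨆ lam : Ω, ‖(inner ℂ (T (k lam)) (k lam) : ℂ)‖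

/-- The absolute value `|T| = (T*T)^(1/2)` of a bounded operator. -/
noncomputable def opAbs {H : Type*} [NormedAddCommGroup H] [InnerProductSpace ℂ H]
    [CompleteSpace H] (T : H →L[ℂ] H) : H →L[ℂ] H :=
  CFC.sqrt (adjoint T * T)


/-!
For a unit vector `x`, `|⟪A† B x, x⟫| = |⟪B x, A x⟫| ≤ ‖B x‖ ‖A x‖`, and `‖B x‖² = ⟪|B|² x, x⟫`.
The Hölder–McCarthy inequality `⟪S x, x⟫ ^ r ≤ ⟪S ^ r x, x⟫` (for `S ≥ 0`, `r ≥ 1`) turns this into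
`|⟪A† B x, x⟫| ^ r ≤ √a √b` with `a = ⟪|B|^(2r) x, x⟫` and `b = ⟪|A|^(2r) x, x⟫`. Since
`⟪(|B|^(2r) + i |A|^(2r)) x, x⟫ = a - i b`, the arithmetic-quadratic mean inequality
`√(ab) ≤ √((a² + b²) / 2)` gives the pointwise bound, and taking suprema over `x = k̂_λ` finishes.
-/

open scoped InnerProductSpace ComplexOrder

/-- The tangent-line inequality `a ^ r + r a ^ (r - 1) (t - a) ≤ t ^ r`, in the shape `c t ≤ t ^ r + d`
that the functional calculus can lift to operators. -/
lemma Real.mul_rpow_sub_one_mul_le {a t r : ℝ} (ha : 0 ≤ a) (ht : 0 ≤ t) (hr : 1 ≤ r) :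
    r * a ^ (r - 1) * t ≤ t ^ r + (r - 1) * a ^ r := by
  have hr₀ : 0 < r := by linarith
  have amgm := Real.geom_mean_le_arith_mean2_weighted (inv_nonneg.mpr hr₀.le)
    (sub_nonneg.mpr (inv_le_one_of_one_le₀ hr)) (Real.rpow_nonneg ht r) (Real.rpow_nonneg ha r)
    (add_sub_cancel _ _)
  rw [Real.rpow_rpow_inv ht hr₀.ne', ← Real.rpow_mul ha, mul_one_sub,
    mul_inv_cancel₀ hr₀.ne'] at amgm
  have := mul_le_mul_of_nonneg_left amgm hr₀.le
  field_simp at this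
  linarith

lemma Complex.sqrt_abs_re_mul_sqrt_abs_im_le (z : ℂ) : √|z.re| * √|z.im| ≤ 1 / √2 * ‖z‖ := by
  rw [← Real.sqrt_mul (abs_nonneg _), Complex.norm_eq_sqrt_sq_add_sq, one_div, ← Real.sqrt_inv,
    ← Real.sqrt_mul (by positivity)]
  apply Real.sqrt_le_sqrt
  nlinarith [sq_nonneg (|z.re| - |z.im|), sq_abs z.re, sq_abs z.im]

section InnerProductSpace

variable {H : Type*} [NormedAddCommGroup H] [InnerProductSpace ℂ H]

lemma re_inner_le_re_inner_of_le {T U : H →L[ℂ] H} (h : T ≤ U) (x : H) :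
    (⟪T x, x⟫_ℂ).re ≤ (⟪U x, x⟫_ℂ).re := by
  simpa [inner_sub_left] using ((le_def T U).mp h).re_inner_nonneg_left x

lemma sqrt_re_inner_mul_sqrt_re_inner_le {P Q : H →L[ℂ] H} (hP : 0 ≤ P) (hQ : 0 ≤ Q) (x : H) :
    √(⟪P x, x⟫_ℂ).re * √(⟪Q x, x⟫_ℂ).re ≤ 1 / √2 * ‖⟪(P + Complex.I • Q) x, x⟫_ℂ‖ := by
  rw [nonneg_iff_isPositive] at hP hQ
  have hPim : (⟪P x, x⟫_ℂ).im = 0 := hP.isSymmetric.im_inner_apply_self x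
  have hQim : (⟪Q x, x⟫_ℂ).im = 0 := hQ.isSymmetric.im_inner_apply_self x
  have hPre : 0 ≤ (⟪P x, x⟫_ℂ).re := hP.re_inner_nonneg_left x
  have hQre : 0 ≤ (⟪Q x, x⟫_ℂ).re := hQ.re_inner_nonneg_left x
  have hre : (⟪(P + Complex.I • Q) x, x⟫_ℂ).re = (⟪P x, x⟫_ℂ).re := by simp [hQim]
  have him : (⟪(P + Complex.I • Q) x, x⟫_ℂ).im = -(⟪Q x, x⟫_ℂ).re := by simp [hPim]
  have := Complex.sqrt_abs_re_mul_sqrt_abs_im_le ⟪(P + Complex.I • Q) x, x⟫_ℂ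
  rwa [hre, him, abs_neg, abs_of_nonneg hPre, abs_of_nonneg hQre] at this

variable {Ω : Type*} {k : Ω → H}

lemma ber_nonneg (T : H →L[ℂ] H) : 0 ≤ ber k T :=
  Real.iSup_nonneg fun _ => norm_nonneg _

lemma norm_inner_le_ber (hk : ∀ lam, ‖k lam‖ = 1) (T : H →L[ℂ] H) (lam : Ω) :
    ‖⟪T (k lam), k lam⟫_ℂ‖ ≤ ber k T := by
  refine le_ciSup (f := fun μ => ‖⟪T (k μ), k μ⟫_ℂ‖) ⟨‖T‖, ?_⟩ lam
  rintro _ ⟨μ, rfl⟩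
  calc ‖⟪T (k μ), k μ⟫_ℂ‖ ≤ ‖T (k μ)‖ * ‖k μ‖ := norm_inner_le_norm _ _
    _ ≤ ‖T‖ * ‖k μ‖ * ‖k μ‖ := by gcongr; exact T.le_opNorm _
    _ = ‖T‖ := by rw [hk]; ring

lemma ber_rpow_le {T : H →L[ℂ] H} {r C : ℝ} (hr : 0 < r) (hC : 0 ≤ C)
    (h : ∀ lam, ‖⟪T (k lam), k lam⟫_ℂ‖ ^ r ≤ C) : ber k T ^ r ≤ C := by
  rw [← Real.le_rpow_inv_iff_of_pos (ber_nonneg T) hC hr]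
  exact Real.iSup_le (fun lam => (Real.le_rpow_inv_iff_of_pos (norm_nonneg _) hC hr).2 (h lam))
    (by positivity)

end InnerProductSpace

section CompleteSpace

variable {H : Type*} [NormedAddCommGroup H] [InnerProductSpace ℂ H] [CompleteSpace H]

lemma rpow_re_inner_le_re_inner_rpow {S : H →L[ℂ] H} (hS : 0 ≤ S) {r : ℝ} (hr : 1 ≤ r) {x : H}
    (hx : ‖x‖ = 1) : (⟪S x, x⟫_ℂ).re ^ r ≤ (⟪(S ^ r) x, x⟫_ℂ).re := by
  set a := (⟪S x, x⟫_ℂ).re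
  have ha : 0 ≤ a := ((nonneg_iff_isPositive S).mp hS).re_inner_nonneg_left x
  have hop : (r * a ^ (r - 1)) • S ≤ S ^ r + algebraMap ℝ _ ((r - 1) * a ^ r) := by
    have hcont : Continuous fun t : ℝ => t ^ r := Real.continuous_rpow_const (by linarith)
    rw [CFC.rpow_eq_cfc_real hS, ← cfc_const_mul_id _ S, ← cfc_add_const _ _ S hcont.continuousOn]
    exact cfc_mono (fun t ht => Real.mul_rpow_sub_one_mul_le ha (spectrum_nonneg_of_nonneg hS ht) hr)
      (hg := (hcont.add continuous_const).continuousOn)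
  have hpow : a ^ (r - 1) * a = a ^ r := by
    rw [← Real.rpow_add_one' ha (by linarith), sub_add_cancel]
  -- evaluated at `x`, the tangent line at `a = ⟪S x, x⟫` loses its linear term
  have hstate := re_inner_le_re_inner_of_le hop x
  simp only [add_apply, smul_apply, ContinuousLinearMap.algebraMap_apply, inner_add_left,
    CStarModule.inner_smul_left_real, inner_self_eq_norm_sq_to_K, hx, Complex.add_re,
    Complex.smul_re, RCLike.ofReal_one, one_pow, Complex.one_re, smul_eq_mul, mul_one] at hstate
  linear_combination hstate - r * hpow

lemma opAbs_rpow_two_mul (T : H →L[ℂ] H) {r : ℝ} (hr : 0 ≤ r) :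
    opAbs T ^ (2 * r) = (adjoint T * T) ^ r := by
  have hTT : 0 ≤ adjoint T * T := star_mul_self_nonneg T
  rw [opAbs, CFC.sqrt_eq_rpow, CFC.rpow_rpow_of_exponent_nonneg _ _ _ (by norm_num) (by positivity)]
  ring_nf

lemma rpow_two_mul_norm_apply_le {T : H →L[ℂ] H} {r : ℝ} (hr : 1 ≤ r) {x : H} (hx : ‖x‖ = 1) :
    ‖T x‖ ^ (2 * r) ≤ (⟪(opAbs T ^ (2 * r)) x, x⟫_ℂ).re := by
  have hquad : (⟪(adjoint T * T) x, x⟫_ℂ).re = ‖T x‖ ^ 2 := by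
    rw [mul_apply_eq_comp, adjoint_inner_left, inner_self_eq_norm_sq_to_K]
    norm_cast
  calc ‖T x‖ ^ (2 * r) = (⟪(adjoint T * T) x, x⟫_ℂ).re ^ r := by
        rw [hquad, Real.rpow_mul (norm_nonneg _), Real.rpow_two]
    _ ≤ (⟪((adjoint T * T) ^ r) x, x⟫_ℂ).re :=
        rpow_re_inner_le_re_inner_rpow (star_mul_self_nonneg T) hr hx
    _ = (⟪(opAbs T ^ (2 * r)) x, x⟫_ℂ).re := by rw [opAbs_rpow_two_mul T (by linarith)]

lemma norm_inner_adjoint_mul_apply_le (A B : H →L[ℂ] H) (x : H) :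
    ‖⟪(adjoint A * B) x, x⟫_ℂ‖ ≤ ‖B x‖ * ‖A x‖ := by
  rw [mul_apply_eq_comp, adjoint_inner_left]
  exact norm_inner_le_norm _ _

end CompleteSpace

theorem berezin_adjoint_mul_power_general
    {H : Type*} [NormedAddCommGroup H] [InnerProductSpace ℂ H] [CompleteSpace H]
    {Ω : Type*} (k : Ω → H) (hk : ∀ lam, ‖k lam‖ = 1)
    (A B : H →L[ℂ] H) (r : ℝ) (hr : 1 ≤ r) :
    ber k (adjoint A * B) ^ r ≤
      (1 / Real.sqrt 2)
        * ber k (CFC.rpow (opAbs B) (2 * r) + Complex.I • CFC.rpow (opAbs A) (2 * r)) := by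
  refine ber_rpow_le (by linarith) (mul_nonneg (by positivity) (ber_nonneg _)) fun lam => ?_
  set x := k lam
  have hsqrt (T : H →L[ℂ] H) : ‖T x‖ ^ r ≤ √(⟪(opAbs T ^ (2 * r)) x, x⟫_ℂ).re := by
    refine Real.le_sqrt_of_sq_le ?_
    rw [← Real.rpow_mul_natCast (norm_nonneg _), Nat.cast_two, mul_comm]
    exact rpow_two_mul_norm_apply_le hr (hk lam)
  calc ‖⟪(adjoint A * B) x, x⟫_ℂ‖ ^ r ≤ (‖B x‖ * ‖A x‖) ^ r := by
        gcongr; exact norm_inner_adjoint_mul_apply_le A B x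
    _ = ‖B x‖ ^ r * ‖A x‖ ^ r := Real.mul_rpow (norm_nonneg _) (norm_nonneg _)
    _ ≤ √(⟪(opAbs B ^ (2 * r)) x, x⟫_ℂ).re * √(⟪(opAbs A ^ (2 * r)) x, x⟫_ℂ).re := by
        gcongr <;> exact hsqrt _
    _ ≤ 1 / √2 * ‖⟪(opAbs B ^ (2 * r) + Complex.I • opAbs A ^ (2 * r)) x, x⟫_ℂ‖ :=
        sqrt_re_inner_mul_sqrt_re_inner_le CFC.rpow_nonneg CFC.rpow_nonneg x
    _ ≤ _ := by gcongr; exact norm_inner_le_ber hk _ lam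

theorem berezin_adjoint_mul_power
    {H : Type*} [NormedAddCommGroup H] [InnerProductSpace ℂ H] [CompleteSpace H]
    {Ω : Type*} [Nonempty Ω] (k : Ω → H) (hk : ∀ lam, ‖k lam‖ = 1)
    (A B : H →L[ℂ] H) (r : ℝ) (hr : 1 ≤ r) :
    ber k (adjoint A * B) ^ r ≤
      (1 / Real.sqrt 2)
        * ber k (CFC.rpow (opAbs B) (2 * r) + Complex.I • CFC.rpow (opAbs A) (2 * r)) :=
  berezin_adjoint_mul_power_general k hk A B r hr
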